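/- arXiv:math/0509467 — 4 statements merged into one kernel-verified Lean document; each statement's English description precedes it below -/
import Mathlib

section
/- Let G be an FC group (every conjugacy class of G is finite) and let D : G → U(n) be a unitary representation. Then the center of the image D(G) has finite index in D(G). -/
/-!
The image `H = D(G)` is again an FC group, so the centralizer of each element of `H` has finite
index (the size of its conjugacy class). The matrices in `H` span a finite-dimensional space,
which is already spanned by finitely many `h₁, …, hₖ ∈ H`; an element commuting with every `hᵢ`
commutes with their span, hence with all of `H`. So the center of `H` contains the intersection
of the finitely many finite-index subgroups `C_H(hᵢ)`.
-/

def IsFCGroup (G : Type*) [Group G] : Prop :=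
  ∀ x : G, (Set.range fun h : G => h * x * h⁻¹).Finite

theorem Subgroup.finiteIndex_centralizer_singleton {G : Type*} [Group G] {g : G}
    (hg : (Set.range fun k : G => k * g * k⁻¹).Finite) :
    (Subgroup.centralizer {g}).FiniteIndex := by
  have horbit : MulAction.orbit (ConjAct G) g = Set.range fun k : G => k * g * k⁻¹ := by
    ext x
    simp [MulAction.mem_orbit_iff, ConjAct.smul_def, ConjAct.toConjAct.surjective.exists]
  have hindex :
      (Subgroup.centralizer {g}).index = (Set.range fun k : G => k * g * k⁻¹).ncard := by
    rw [Subgroup.centralizer_eq_comap_stabilizer, ← horbit, ← MulAction.index_stabilizer]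
    exact Subgroup.index_comap_of_surjective _ ConjAct.toConjAct.surjective
  exact ⟨hindex ▸ ((Set.ncard_pos hg).mpr (Set.range_nonempty _)).ne'⟩

namespace IsFCGroup

variable {G H : Type*} [Group G] [Group H]

theorem of_surjective (hG : IsFCGroup G) {f : G →* H} (hf : Function.Surjective f) :
    IsFCGroup H := by
  intro y
  obtain ⟨x, rfl⟩ := hf y
  have hconj : (Set.range fun k : H => k * f x * k⁻¹) =
      f '' Set.range fun h : G => h * x * h⁻¹ := by
    rw [← hf.range_comp, ← Set.range_comp]
    simp [Function.comp_def]
  rw [hconj]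
  exact (hG x).image f

theorem finiteIndex_centralizer (hG : IsFCGroup G) {s : Set G} (hs : s.Finite) :
    (Subgroup.centralizer s).FiniteIndex := by
  have : Finite s := hs.to_subtype
  rw [Subgroup.centralizer_eq_iInf, iInf_subtype']
  exact Subgroup.finiteIndex_iInf fun g => Subgroup.finiteIndex_centralizer_singleton (hG g)

theorem finiteIndex_center_of_centralizer_le (hG : IsFCGroup G) {s : Set G} (hs : s.Finite)
    (hcent : Subgroup.centralizer s ≤ Subgroup.center G) :
    (Subgroup.center G).FiniteIndex :=
  have := hG.finiteIndex_centralizer hs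
  Subgroup.finiteIndex_of_le hcent

end IsFCGroup

theorem exists_finite_centralizer_le_center_of_injective {K A H : Type*} [Field K] [Ring A]
    [Algebra K A] [FiniteDimensional K A] [Group H] {φ : H →* A} (hφ : Function.Injective φ) :
    ∃ s : Set H, s.Finite ∧ Subgroup.centralizer s ≤ Subgroup.center H := by
  obtain ⟨b, hb_range, hb_span, hb_li⟩ := exists_linearIndependent K (Set.range φ)
  refine ⟨φ ⁻¹' b, hb_li.setFinite.preimage hφ.injOn, fun x hx => ?_⟩
  have hspan : Submodule.span K b ≤ (Subalgebra.centralizer K {φ x}).toSubmodule := by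
    rw [Submodule.span_le]
    intro a ha
    obtain ⟨y, rfl⟩ := hb_range ha
    rintro _ rfl
    simpa only [map_mul] using (congrArg φ (hx y ha)).symm
  refine Subgroup.mem_center_iff.mpr fun y => hφ ?_
  have hy : φ y ∈ Submodule.span K b := hb_span ▸ Submodule.subset_span ⟨y, rfl⟩
  simpa only [map_mul] using (hspan hy (φ x) rfl).symm

theorem stmt_0 {G : Type*} [Group G] (n : ℕ)
    (hFC : ∀ x : G, (Set.range fun h : G => h * x * h⁻¹).Finite)
    (D : G →* Matrix.unitaryGroup (Fin n) ℂ) :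
    (Subgroup.center ↥D.range).FiniteIndex := by
  have hrange : IsFCGroup D.range := IsFCGroup.of_surjective hFC D.rangeRestrict_surjective
  let φ : D.range →* Matrix (Fin n) (Fin n) ℂ :=
    (Matrix.unitaryGroup (Fin n) ℂ).subtype.comp D.range.subtype
  have hφ : Function.Injective φ := Subtype.val_injective.comp Subtype.val_injective
  obtain ⟨s, hs, hcent⟩ := exists_finite_centralizer_le_center_of_injective (K := ℂ) hφ
  exact hrange.finiteIndex_center_of_centralizer_le hs hcent
end

section
/- Let G be an FC group. Then the commutator subgroup G' of G is a torsion group. -/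
/-!
An element of `G'` is a product of finitely many commutators, so it lies in `H'` for some
subgroup `H = ⟨s⟩` with `s` finite. In an FC group the centralizer of each element of `s` has
finite index, hence so has the centralizer of `s`, and therefore the center of `H` has finite
index in `H`. A commutator `⁅a, b⁆` only depends on the cosets of `a` and `b` modulo the center,
so `H` has finitely many commutators, and by Schur's theorem `H'` is finite.
-/

open scoped commutatorElement

theorem commutatorElement_mul_mem_center {G : Type*} [Group G] {a b z w : G}
    (hz : z ∈ Subgroup.center G) (hw : w ∈ Subgroup.center G) : ⁅a * z, b * w⁆ = ⁅a, b⁆ := by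
  have hz' : ⁅z, b * w⁆ = 1 :=
    commutatorElement_eq_one_iff_mul_comm.mpr (Subgroup.mem_center_iff.mp hz _).symm
  have hw' : ⁅a, w⁆ = 1 :=
    commutatorElement_eq_one_iff_mul_comm.mpr (Subgroup.mem_center_iff.mp hw a)
  rw [commutatorElement_mul_left_eq_conj_mul, hz', commutatorElement_mul_right_eq_mul_conj, hw']
  group

namespace Subgroup

variable {G : Type*} [Group G]

theorem finiteIndex_centralizer_singleton_s3 {x : G}
    (hx : (Set.range fun h : G => h * x * h⁻¹).Finite) : (centralizer {x}).FiniteIndex := by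
  have horbit : (MulAction.orbit (ConjAct G) x).Finite :=
    hx.subset fun _ ⟨h, hh⟩ => ⟨ConjAct.ofConjAct h, hh ▸ (ConjAct.smul_def h x).symm⟩
  have hindex : (centralizer {x}).index = (MulAction.orbit (ConjAct G) x).ncard := by
    rw [centralizer_eq_comap_stabilizer, ← MulAction.index_stabilizer]
    exact index_comap_of_surjective _ (MulEquiv.surjective _)
  rw [finiteIndex_iff, hindex]
  exact Set.ncard_ne_zero_of_mem (MulAction.mem_orbit_self x) horbit

theorem finiteIndex_centralizer_finset {s : Finset G}
    (hs : ∀ x ∈ s, (Set.range fun h : G => h * x * h⁻¹).Finite) :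
    (centralizer (s : Set G)).FiniteIndex := by
  rw [centralizer_eq_iInf]
  exact finiteIndex_iInf' _ fun x hx => finiteIndex_centralizer_singleton_s3 (hs x hx)

theorem subgroupOf_closure_centralizer_le_center (s : Set G) :
    (centralizer s).subgroupOf (closure s) ≤ center (closure s) := by
  intro x hx
  rw [mem_subgroupOf, ← centralizer_closure] at hx
  exact mem_center_iff.mpr fun y => Subtype.ext (hx y y.2)

theorem finiteIndex_center_closure {s : Set G} [(centralizer s).FiniteIndex] :
    (center (closure s)).FiniteIndex :=
  finiteIndex_of_le (subgroupOf_closure_centralizer_le_center s)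

variable (G) in
theorem finite_commutatorSet_of_finiteIndex_center [(center G).FiniteIndex] :
    Finite (commutatorSet G) := by
  refine Set.Finite.to_subtype <| (Set.finite_range
    fun p : (G ⧸ center G) × (G ⧸ center G) => ⁅p.1.out, p.2.out⁆).subset ?_
  rintro _ ⟨a, b, rfl⟩
  obtain ⟨z, hz⟩ := QuotientGroup.mk_out_eq_mul (center G) a
  obtain ⟨w, hw⟩ := QuotientGroup.mk_out_eq_mul (center G) b
  exact ⟨(a, b), by simp only [hz, hw, commutatorElement_mul_mem_center z.2 w.2]⟩

theorem finite_commutator_of_finiteIndex_center (H : Subgroup G) [(center H).FiniteIndex] :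
    Finite (⁅H, H⁆ : Subgroup G) := by
  have := finite_commutatorSet_of_finiteIndex_center H
  have hfinite : Finite (_root_.commutator H) := inferInstance
  have hmap : (_root_.commutator H).map H.subtype = ⁅H, H⁆ := by
    simp [_root_.commutator, map_commutator, ← MonoidHom.range_eq_map]
  rw [← hmap]
  exact (Set.finite_coe_iff.mp hfinite |>.image H.subtype).to_subtype

theorem exists_finset_mem_commutator_closure {g : G} (hg : g ∈ _root_.commutator G) :
    ∃ s : Finset G, g ∈ ⁅closure (s : Set G), closure (s : Set G)⁆ := by
  classical
  rw [commutator_eq_closure] at hg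
  induction hg using closure_induction with
  | mem x hx =>
    obtain ⟨a, b, rfl⟩ := hx
    exact ⟨{a, b}, commutator_mem_commutator (subset_closure (by simp)) (subset_closure (by simp))⟩
  | one => exact ⟨∅, one_mem _⟩
  | mul x y _ _ hx hy =>
    obtain ⟨s, hs⟩ := hx
    obtain ⟨t, ht⟩ := hy
    have hmono {u : Finset G} (hu : u ⊆ s ∪ t) :
        ⁅closure (u : Set G), closure (u : Set G)⁆ ≤ ⁅closure ↑(s ∪ t), closure ↑(s ∪ t)⁆ :=
      commutator_mono (closure_mono (by exact_mod_cast hu)) (closure_mono (by exact_mod_cast hu))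
    exact ⟨s ∪ t, mul_mem (hmono Finset.subset_union_left hs) (hmono Finset.subset_union_right ht)⟩
  | inv x _ hx =>
    obtain ⟨s, hs⟩ := hx
    exact ⟨s, inv_mem hs⟩

theorem finite_commutator_closure_of_finite_conj
    (hFC : ∀ x : G, (Set.range fun h : G => h * x * h⁻¹).Finite) (s : Finset G) :
    Finite (⁅closure (s : Set G), closure (s : Set G)⁆ : Subgroup G) := by
  have := finiteIndex_centralizer_finset fun x (_ : x ∈ s) => hFC x
  have := finiteIndex_center_closure (s := (s : Set G))
  exact finite_commutator_of_finiteIndex_center _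

end Subgroup

theorem stmt_3 {G : Type*} [Group G]
    (hFC : ∀ x : G, (Set.range fun h : G => h * x * h⁻¹).Finite) :
    Monoid.IsTorsion ↥(commutator G) := by
  intro g
  obtain ⟨s, hs⟩ := Subgroup.exists_finset_mem_commutator_closure g.2
  have := Subgroup.finite_commutator_closure_of_finite_conj hFC s
  have hfin : IsOfFinOrder (⟨g, hs⟩ : (⁅Subgroup.closure (s : Set G),
      Subgroup.closure (s : Set G)⁆ : Subgroup G)) := isOfFinOrder_of_finite _
  exact Submonoid.isOfFinOrder_coe.mp (Submonoid.isOfFinOrder_coe.mpr hfin :)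
end

section
/- Let G be an FC torsion group and F a finite subset of G. Then the normal closure of F in G is finite. -/
open Subgroup

private lemma conj_list_prod {G : Type*} [Group G] (g : G) (l : List G) :
    (l.map fun x => g * x * g⁻¹).prod = g * l.prod * g⁻¹ := by
  induction l with
  | nil => simp
  | cons a t ih => simp only [List.map_cons, List.prod_cons, ih]; group

private lemma gather {G : Type*} [Group G] [DecidableEq G] {B : Set G}
    (hconj : ∀ b ∈ B, ∀ g : G, g * b * g⁻¹ ∈ B) (a : G) :
    ∀ (k : ℕ) (l : List G), (∀ y ∈ l, y ∈ B) → k ≤ l.count a →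
    ∃ m : List G, (∀ y ∈ m, y ∈ B) ∧ m.length + k = l.length ∧ a ^ k * m.prod = l.prod := by
  intro k
  induction k with
  | zero => intro l hl _; exact ⟨l, hl, by simp, by simp⟩
  | succ k ih =>
    intro l hl hcount
    have hmem : a ∈ l := List.count_pos_iff.mp (lt_of_lt_of_le (Nat.succ_pos k) hcount)
    obtain ⟨s, t, rfl⟩ := List.append_of_mem hmem
    set f : G → G := fun x => a⁻¹ * x * a with hf
    have hfinj : Function.Injective f := by
      intro x y hxy
      simpa [hf] using mul_left_cancel (mul_right_cancel hxy)
    set l₂ : List G := s.map f ++ t with hl₂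
    have hl₂mem : ∀ y ∈ l₂, y ∈ B := by
      intro y hy
      rcases List.mem_append.mp hy with hy | hy
      · obtain ⟨x, hx, rfl⟩ := List.mem_map.mp hy
        simpa [hf] using hconj x (hl x (by simp [hx])) a⁻¹
      · exact hl y (by simp [hy])
    have hfa : f a = a := by simp [hf]
    have hcount₂ : k ≤ l₂.count a := by
      have h1 : (s.map f).count a = s.count a := by
        have h0 := List.count_map_of_injective s f hfinj a
        rw [hfa] at h0; exact h0
      have h2 : (s ++ a :: t).count a = s.count a + t.count a + 1 := by
        simp [List.count_append, List.count_cons]; omega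
      have : l₂.count a = s.count a + t.count a := by simp [hl₂, List.count_append, h1]
      omega
    obtain ⟨m, hm, hlen, hprod⟩ := ih l₂ hl₂mem hcount₂
    refine ⟨m, hm, by simp [hl₂] at hlen ⊢; omega, ?_⟩
    have h3 : l₂.prod = a⁻¹ * (s ++ a :: t).prod := by
      simp only [hl₂, List.prod_append, List.prod_cons]
      have := conj_list_prod a⁻¹ s
      simp only [inv_inv] at this
      rw [this]; group
    rw [pow_succ', mul_assoc, hprod, h3]
    group

private lemma reduce {G : Type*} [Group G] {B : Set G} (hB : B.Finite)
    (hconj : ∀ b ∈ B, ∀ g : G, g * b * g⁻¹ ∈ B) (htor : Monoid.IsTorsion G) :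
    ∀ l : List G, (∀ y ∈ l, y ∈ B) →
    ∃ m : List G, (∀ y ∈ m, y ∈ B) ∧
      m.length ≤ ∑ b ∈ hB.toFinset, (orderOf b - 1) ∧ m.prod = l.prod := by
  set N := ∑ b ∈ hB.toFinset, (orderOf b - 1) with hN
  have key : ∀ n : ℕ, ∀ l : List G, l.length ≤ n → (∀ y ∈ l, y ∈ B) →
      ∃ m : List G, (∀ y ∈ m, y ∈ B) ∧ m.length ≤ N ∧ m.prod = l.prod := by
    classical
    intro n
    induction n with
    | zero => intro l hlen hl; exact ⟨l, hl, by omega, rfl⟩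
    | succ n ih =>
      intro l hlen hl
      by_cases hle : l.length ≤ N
      · exact ⟨l, hl, hle, rfl⟩
      push_neg at hle
      -- pigeonhole: some b has count ≥ orderOf b
      have hlensum : l.length = ∑ b ∈ hB.toFinset, l.count b := by
        classical
        have hsub : l.toFinset ⊆ hB.toFinset := by
          intro x hx; simp only [List.mem_toFinset] at hx
          exact hB.mem_toFinset.mpr (hl x hx)
        have heq : ∑ b ∈ l.toFinset, l.count b = ∑ b ∈ hB.toFinset, l.count b :=
          Finset.sum_subset hsub (fun x _ hx =>
            List.count_eq_zero.mpr (by simpa using hx))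
        rw [← heq]
        simpa using (Multiset.toFinset_sum_count_eq (↑l : Multiset G)).symm
      have hex : ∃ b ∈ hB.toFinset, orderOf b ≤ l.count b := by
        by_contra hcon
        push_neg at hcon
        have : l.length ≤ N := by
          rw [hlensum, hN]
          apply Finset.sum_le_sum
          intro b hb
          have := hcon b hb
          have hpos := (htor b).orderOf_pos
          omega
        omega
      obtain ⟨b, hbB, hbcount⟩ := hex
      obtain ⟨m, hm, hmlen, hmprod⟩ := gather hconj b (orderOf b) l hl hbcount
      have hpos := (htor b).orderOf_pos
      obtain ⟨m', hm', hm'len, hm'prod⟩ := ih m (by omega) hm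
      refine ⟨m', hm', hm'len, ?_⟩
      rw [hm'prod, ← hmprod, pow_orderOf_eq_one, one_mul]
  intro l hl
  exact key l.length l le_rfl hl

theorem stmt_8 {G : Type*} [Group G]
    (hFC : ∀ x : G, (Set.range fun h : G => h * x * h⁻¹).Finite)
    (htor : Monoid.IsTorsion G) (F : Set G) (hF : F.Finite) :
    Finite ↥(Subgroup.normalClosure F) := by
  classical
  set B : Set G := Group.conjugatesOfSet (F ∪ F⁻¹) with hBdef
  have hBfin : B.Finite := by
    rw [hBdef, Group.conjugatesOfSet]
    apply Set.Finite.biUnion (hF.union hF.inv)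
    intro a _
    apply (hFC a).subset
    intro b hb
    obtain ⟨c, hc⟩ := hb
    exact ⟨↑c, (eq_mul_inv_iff_mul_eq.mpr hc.symm).symm⟩
  have hconj : ∀ b ∈ B, ∀ g : G, g * b * g⁻¹ ∈ B := fun b hb g =>
    Group.conj_mem_conjugatesOfSet hb
  have hinv : ∀ b ∈ B, b⁻¹ ∈ B := by
    intro b hb
    rw [hBdef, Group.mem_conjugatesOfSet_iff] at hb ⊢
    obtain ⟨a, ha, hc⟩ := hb
    refine ⟨a⁻¹, ?_, ?_⟩
    · rcases ha with ha | ha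
      · exact Or.inr (by simpa using ha)
      · exact Or.inl (by simpa using ha)
    · obtain ⟨c, hc⟩ := hc
      exact ⟨c, hc.inv_right⟩
  -- the finite candidate set
  set P : Set G := {x | ∃ l : List G, (∀ y ∈ l, y ∈ B) ∧
      l.length ≤ ∑ b ∈ hBfin.toFinset, (orderOf b - 1) ∧ l.prod = x} with hPdef
  have hPfin : P.Finite := by
    set N := ∑ b ∈ hBfin.toFinset, (orderOf b - 1)
    have : P ⊆ (fun l : List ↥hBfin.toFinset => (l.map Subtype.val).prod) ''
        {l | l.length ≤ N} := by
      rintro x ⟨l, hlB, hlen, rfl⟩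
      refine ⟨l.attach.map (fun y => ⟨y.1, hBfin.mem_toFinset.mpr (hlB y.1 y.2)⟩), ?_, ?_⟩
      · simpa using hlen
      · simp [List.map_map, Function.comp_def]
    exact ((List.finite_length_le _ N).image _).subset this
  have hsub : (Subgroup.normalClosure F : Set G) ⊆ P := by
    have h1 : Subgroup.normalClosure F ≤ Subgroup.closure B :=
      le_trans (Subgroup.normalClosure_mono Set.subset_union_left) le_rfl
    intro x hx
    have hx2 : x ∈ (Subgroup.closure B).toSubmonoid := h1 hx
    rw [Subgroup.closure_toSubmonoid] at hx2
    have hBB : B ∪ B⁻¹ = B := by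
      apply Set.union_eq_self_of_subset_right
      intro y hy
      simpa using hinv y⁻¹ (Set.mem_inv.mp hy)
    rw [hBB] at hx2
    obtain ⟨l, hl, rfl⟩ := Submonoid.exists_list_of_mem_closure hx2
    obtain ⟨m, hm, hmlen, hmprod⟩ := reduce hBfin hconj htor l hl
    exact ⟨m, hm, hmlen, hmprod⟩
  exact (hPfin.subset hsub).to_subtype
end

section
/- Let K be a compact Lie group that contains a dense subgroup H which is an FC group. Then the identity component K₀ of K is contained in the center of K. -/
private lemma finite_preconnected_subsingleton {α : Type*} [TopologicalSpace α] [T1Space α]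
    {s : Set α} (hf : s.Finite) (hp : IsPreconnected s) : s.Subsingleton := by
  intro a ha b hb
  by_contra hab
  have h2 : IsClosed (s \ {a}) := (hf.subset Set.diff_subset).isClosed
  have hcover : s ⊆ {a} ∪ (s \ {a}) := by
    intro x hx
    by_cases hxa : x = a
    · exact Or.inl hxa
    · exact Or.inr ⟨hx, hxa⟩
  obtain ⟨x, -, hx1, hx2⟩ := (isPreconnected_closed_iff.mp hp) {a} (s \ {a})
    isClosed_singleton h2 hcover ⟨a, ha, rfl⟩ ⟨b, hb, hb, fun hba => hab (Set.mem_singleton_iff.mp hba).symm⟩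
  exact hx2.2 hx1

theorem stmt_15 {E : Type*} [NormedAddCommGroup E] [NormedSpace ℝ E]
    {M : Type*} [TopologicalSpace M] (I : ModelWithCorners ℝ E M)
    {K : Type*} [Group K] [TopologicalSpace K] [ChartedSpace M K]
    [LieGroup I (⊤ : ℕ∞) K] [CompactSpace K]
    (H : Subgroup K) (hdense : Dense (H : Set K))
    (hFC : ∀ x : ↥H, (Set.range fun h : ↥H => h * x * h⁻¹).Finite) :
    connectedComponent (1 : K) ⊆ (Subgroup.center K : Set K) := by
  have htg : IsTopologicalGroup K := topologicalGroup_of_lieGroup I (⊤ : ℕ∞)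
  have ht1 : T1Space K := I.t1Space K
  -- step 1: for x ∈ H, every element of the identity component commutes with x
  have key : ∀ x : ↥H, ∀ k ∈ connectedComponent (1 : K), k * (x : K) * k⁻¹ = x := by
    intro x k hk
    set S : Set K := (fun h : ↥H => ((h * x * h⁻¹ : ↥H) : K)) '' Set.univ with hS
    have hSfin : S.Finite := by
      refine ((hFC x).image (fun y : ↥H => (y : K))).subset ?_
      rintro _ ⟨h, -, rfl⟩
      exact ⟨h * x * h⁻¹, ⟨h, rfl⟩, rfl⟩
    have hconj : Continuous fun g : K => g * (x : K) * g⁻¹ := by continuity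
    have horbit : ∀ g : K, g * (x : K) * g⁻¹ ∈ S := by
      have hclosed : IsClosed ((fun g : K => g * (x : K) * g⁻¹) ⁻¹' S) :=
        (hSfin.isClosed).preimage hconj
      have hsub : (H : Set K) ⊆ (fun g : K => g * (x : K) * g⁻¹) ⁻¹' S := by
        rintro g hg
        exact ⟨⟨g, hg⟩, trivial, rfl⟩
      have hcl : (closure (H : Set K)) ⊆ (fun g : K => g * (x : K) * g⁻¹) ⁻¹' S :=
        hclosed.closure_subset_iff.mpr hsub
      intro g
      exact hcl (hdense.closure_eq ▸ Set.mem_univ g : g ∈ closure (H : Set K))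
    set T : Set K := (fun g : K => g * (x : K) * g⁻¹) '' connectedComponent (1 : K) with hT
    have himg : T ⊆ S := by rintro _ ⟨g, -, rfl⟩; exact horbit g
    have hpre : IsPreconnected T :=
      (isConnected_connectedComponent.isPreconnected).image _ hconj.continuousOn
    have hsub : T.Subsingleton :=
      finite_preconnected_subsingleton (hSfin.subset himg) hpre
    have h1 : (x : K) ∈ T := ⟨1, mem_connectedComponent, by group⟩
    have hk' : k * (x : K) * k⁻¹ ∈ T := ⟨k, hk, rfl⟩
    exact hsub hk' h1
  -- step 2: extend to all of K by density, using T2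
  intro k hk
  rw [SetLike.mem_coe, Subgroup.mem_center_iff]
  intro g
  have hcl : IsClosed {y : K | k * y * k⁻¹ = y} :=
    isClosed_eq (by continuity) continuous_id
  have hHsub : (H : Set K) ⊆ {y : K | k * y * k⁻¹ = y} := fun y hy => key ⟨y, hy⟩ k hk
  have hmem : g ∈ {y : K | k * y * k⁻¹ = y} :=
    hcl.closure_subset_iff.mpr hHsub (hdense.closure_eq ▸ Set.mem_univ g)
  have h : k * g * k⁻¹ = g := hmem
  calc g * k = (k * g * k⁻¹) * k := by rw [h]
    _ = k * g := by group
end
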